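/- (Appendix lemma: accountable safety with acknowledgments.) Let V₁, V₂ be sets of FFG-votes and A₁, A₂ sets of acks among n validators. If 𝒞₁ is finalized-with-acks w.r.t. (V₁, A₁), 𝒞₂ is finalized-with-acks w.r.t. (V₂, A₂), and 𝒞₁.chain conflicts with 𝒞₂.chain, then the set of validators that violate E1 or E2 w.r.t. V₁ ∪ V₂, or E3 w.r.t. (V₁ ∪ V₂, A₁ ∪ A₂), has cardinality m with 3·m ≥ n. -/

import Mathlib

structure Block (β : Type) where
  body : β
  p : ℤ

def genesisBlock {β : Type} (g : β) : Block β := ⟨g, -1⟩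

structure Chain (β : Type) (g : β) where
  blocks : List (Block β)
  ne : blocks ≠ []
  head_genesis : blocks.head? = some (genesisBlock g)
  strict : List.Chain' (fun a b => a.p < b.p) blocks

namespace Chain

variable {β : Type} {g : β}

/-- The height of a chain: the slot of its last block. -/
def height (χ : Chain β g) : ℤ := (χ.blocks.getLast χ.ne).p

/-- `χ₁ ⪯ χ₂`: `χ₁` is a prefix of `χ₂`. -/
def IsPrefix (χ₁ χ₂ : Chain β g) : Prop := χ₁.blocks <+: χ₂.blocks

/-- Two chains conflict if neither is a prefix of the other. -/
def Conflicts (χ₁ χ₂ : Chain β g) : Prop := ¬ χ₁.IsPrefix χ₂ ∧ ¬ χ₂.IsPrefix χ₁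

end Chain

def genesisChain {β : Type} (g : β) : Chain β g where
  blocks := [genesisBlock g]
  ne := by simp
  head_genesis := rfl
  strict := List.isChain_singleton _

structure Checkpoint (β : Type) (g : β) where
  chain : Chain β g
  c : ℕ
  height_le : chain.height ≤ (c : ℤ)

def genesisCheckpoint {β : Type} (g : β) : Checkpoint β g where
  chain := genesisChain g
  c := 0
  height_le := by simp [Chain.height, genesisChain, genesisBlock]

namespace Checkpoint

variable {β : Type} {g : β}

/-- Lexicographic order on checkpoints: `𝒞 ≤ 𝒞′`. -/
def le (C C' : Checkpoint β g) : Prop :=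
  C.c < C'.c ∨ (C.c = C'.c ∧ C.chain.height ≤ C'.chain.height)

/-- Strict lexicographic order on checkpoints: `𝒞 < 𝒞′`. -/
def lt (C C' : Checkpoint β g) : Prop :=
  C.c < C'.c ∨ (C.c = C'.c ∧ C.chain.height < C'.chain.height)

end Checkpoint

structure FFGVote (n : ℕ) (β : Type) (g : β) where
  source : Checkpoint β g
  target : Checkpoint β g
  sender : Fin n

def FFGVote.Valid {n : ℕ} {β : Type} {g : β} (m : FFGVote n β g) : Prop :=
  m.source.chain.IsPrefix m.target.chain ∧ m.source.c < m.target.c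

/-- The set of senders of a set of votes. -/
def senders {n : ℕ} {β : Type} {g : β} (M : Set (FFGVote n β g)) : Set (Fin n) :=
  {v | ∃ m ∈ M, m.sender = v}

/-- A checkpoint is justified w.r.t. a set of votes `V`. -/
inductive Justified {n : ℕ} {β : Type} {g : β} (V : Set (FFGVote n β g)) :
    Checkpoint β g → Prop
  | genesis : Justified V (genesisCheckpoint g)
  | step (C : Checkpoint β g) (M : Set (FFGVote n β g))
      (hMV : M ⊆ V)
      (hcard : 2 * n ≤ 3 * (senders M).ncard)
      (hjust : ∀ m ∈ M, Justified V m.source)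
      (hvotes : ∀ m ∈ M, m.Valid ∧
        m.source.chain.IsPrefix C.chain ∧ C.chain.IsPrefix m.target.chain ∧
        m.target.c = C.c) :
      Justified V C

/-- A checkpoint is finalized w.r.t. a set of votes `V`. -/
def Finalized {n : ℕ} {β : Type} {g : β} (V : Set (FFGVote n β g))
    (C : Checkpoint β g) : Prop :=
  C = genesisCheckpoint g ∨
    (Justified V C ∧ ∃ M ⊆ V, 2 * n ≤ 3 * (senders M).ncard ∧
      ∀ m ∈ M, m.Valid ∧ m.source = C ∧ m.target.c = C.c + 1)

/-- E1 (double voting). -/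
def ViolatesE1 {n : ℕ} {β : Type} {g : β} (V : Set (FFGVote n β g)) (v : Fin n) : Prop :=
  ∃ m₁ ∈ V, ∃ m₂ ∈ V, m₁.sender = v ∧ m₂.sender = v ∧ m₁ ≠ m₂ ∧
    m₁.target.c = m₂.target.c

/-- E2 (surround voting). -/
def ViolatesE2 {n : ℕ} {β : Type} {g : β} (V : Set (FFGVote n β g)) (v : Fin n) : Prop :=
  ∃ m₁ ∈ V, ∃ m₂ ∈ V, m₁.sender = v ∧ m₂.sender = v ∧
    m₂.source.lt m₁.source ∧ m₁.target.c < m₂.target.c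

structure Ack (n : ℕ) (β : Type) (g : β) where
  cp : Checkpoint β g
  sender : Fin n

/-- E3 (ack surround). -/
def ViolatesE3 {n : ℕ} {β : Type} {g : β} (V : Set (FFGVote n β g))
    (A : Set (Ack n β g)) (v : Fin n) : Prop :=
  ∃ m ∈ V, ∃ a ∈ A, m.sender = v ∧ a.sender = v ∧
    m.source.lt a.cp ∧ a.cp.c < m.target.c

/-- Finalized with acknowledgments. -/
def FinalizedWithAcks {n : ℕ} {β : Type} {g : β} (V : Set (FFGVote n β g))
    (A : Set (Ack n β g)) (C : Checkpoint β g) : Prop :=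
  Finalized V C ∨
    (Justified V C ∧ 2 * n ≤ 3 * (Set.ncard {v : Fin n | (⟨C, v⟩ : Ack n β g) ∈ A}))

/-!
Suppose fewer than a third of the validators are slashable. Then any two quorums (sets of at
least two thirds of the validators) share an honest validator. Two justified checkpoints of the
same slot are therefore compatible: an honest validator voted for both with a single vote, whose
target chain extends both. If `C` is finalized, an honest member of the finalizing quorum never
casts a vote whose source is below `C` and whose target slot is above `C.c`: together with its
finalizing vote this would be a double or surround vote, together with its ack an E3 violation.
Hence, by induction on justification, every justified checkpoint of higher slot extends `C`: the
source of an honest vote justifying it cannot be below `C`, so it either has the slot of `C` and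
extends it, or has a higher slot and extends `C` by induction.
-/

section AccountableSafety

variable {n : ℕ} {β : Type} {g : β}

theorem not_inter_subset_of_two_thirds {E s₁ s₂ : Set (Fin n)} (h₁ : 2 * n ≤ 3 * s₁.ncard)
    (h₂ : 2 * n ≤ 3 * s₂.ncard) (hE : 3 * E.ncard < n) : ¬ s₁ ∩ s₂ ⊆ E := by
  intro hsub
  have hunion : (s₁ ∪ s₂).ncard ≤ n := by simpa using Set.ncard_le_card (s₁ ∪ s₂)
  have hinter := Set.ncard_union_add_ncard_inter s₁ s₂
  have hE' := Set.ncard_le_ncard hsub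
  omega

theorem genesisChain_isPrefix (χ : Chain β g) : (genesisChain g).IsPrefix χ := by
  obtain ⟨_ | ⟨b, t⟩, hne, hhead, -⟩ := χ
  · exact absurd rfl hne
  · obtain rfl : b = genesisBlock g := Option.some.inj hhead
    exact ⟨t, rfl⟩

namespace Chain

theorem IsPrefix.trans {χ₁ χ₂ χ₃ : Chain β g} (h₁₂ : χ₁.IsPrefix χ₂) (h₂₃ : χ₂.IsPrefix χ₃) :
    χ₁.IsPrefix χ₃ :=
  List.IsPrefix.trans h₁₂ h₂₃

theorem IsPrefix.height_lt {χ₁ χ₂ : Chain β g} (h : χ₁.IsPrefix χ₂) (hne : ¬ χ₂.IsPrefix χ₁) :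
    χ₁.height < χ₂.height := by
  obtain ⟨t, ht⟩ := h
  have ht_ne : t ≠ [] := by
    rintro rfl
    exact hne ⟨[], by simp [← ht]⟩
  have hpair : (χ₁.blocks ++ t).Pairwise (fun a b : Block β => a.p < b.p) := by
    rw [ht]
    exact List.isChain_iff_pairwise.mp χ₂.strict
  have hlast : χ₂.blocks.getLast χ₂.ne = t.getLast ht_ne := by
    simp only [← ht]
    exact List.getLast_append_of_ne_nil _ ht_ne
  unfold height
  rw [hlast]
  exact (List.pairwise_append.mp hpair).2.2 _ (List.getLast_mem _) _ (List.getLast_mem _)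

end Chain

theorem Checkpoint.lt_irrefl (C : Checkpoint β g) : ¬ C.lt C := by
  rintro (h | ⟨-, h⟩) <;> omega

def FFGVote.Surrounds (m : FFGVote n β g) (C : Checkpoint β g) : Prop :=
  m.source.lt C ∧ C.c < m.target.c

def slashable (V : Set (FFGVote n β g)) (A : Set (Ack n β g)) : Set (Fin n) :=
  {v | ViolatesE1 V v ∨ ViolatesE2 V v ∨ ViolatesE3 V A v}

theorem Justified.mono {V W : Set (FFGVote n β g)} {C : Checkpoint β g} (hVW : V ⊆ W)
    (h : Justified V C) : Justified W C := by
  induction h with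
  | genesis => exact .genesis
  | step C M hMV hcard _ hvotes ih => exact .step C M (hMV.trans hVW) hcard ih hvotes

theorem FinalizedWithAcks.mono {V W : Set (FFGVote n β g)} {A B : Set (Ack n β g)}
    {C : Checkpoint β g} (hVW : V ⊆ W) (hAB : A ⊆ B) (h : FinalizedWithAcks V A C) :
    FinalizedWithAcks W B C := by
  rcases h with (hg | ⟨hJ, M, hMV, hM⟩) | ⟨hJ, hacks⟩
  · exact .inl (.inl hg)
  · exact .inl (.inr ⟨hJ.mono hVW, M, hMV.trans hVW, hM⟩)
  · refine .inr ⟨hJ.mono hVW, hacks.trans ?_⟩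
    exact Nat.mul_le_mul_left 3 (Set.ncard_le_ncard fun v hv => hAB hv)

theorem FinalizedWithAcks.justified {V : Set (FFGVote n β g)} {A : Set (Ack n β g)}
    {C : Checkpoint β g} (h : FinalizedWithAcks V A C) : Justified V C := by
  rcases h with (rfl | ⟨hJ, -⟩) | ⟨hJ, -⟩
  · exact .genesis
  all_goals exact hJ

variable {V : Set (FFGVote n β g)} {A : Set (Ack n β g)} {C D : Checkpoint β g}

theorem FinalizedWithAcks.exists_quorum_not_surrounds (h : FinalizedWithAcks V A C)
    (hC : C ≠ genesisCheckpoint g) :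
    ∃ Q : Set (Fin n), 2 * n ≤ 3 * Q.ncard ∧
      ∀ v ∈ Q, v ∉ slashable V A → ∀ m ∈ V, m.sender = v → ¬ m.Surrounds C := by
  rcases h with (hg | ⟨-, M, hMV, hcard, hM⟩) | ⟨-, hacks⟩
  · exact absurd hg hC
  · refine ⟨senders M, hcard, ?_⟩
    rintro v ⟨m₁, hm₁, rfl⟩ hv m hm hsender ⟨hsource, htarget⟩
    obtain ⟨-, hsource₁, htarget₁⟩ := hM m₁ hm₁
    rcases Nat.lt_or_eq_of_le (Nat.succ_le_of_lt htarget) with hgt | heq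
    · exact hv (.inr (.inl
        ⟨m₁, hMV hm₁, m, hm, rfl, hsender, hsource₁ ▸ hsource, htarget₁ ▸ hgt⟩))
    · have hne : m₁ ≠ m := by
        rintro rfl
        exact C.lt_irrefl (hsource₁ ▸ hsource)
      exact hv (.inl ⟨m₁, hMV hm₁, m, hm, rfl, hsender, hne, htarget₁.trans heq⟩)
  · refine ⟨_, hacks, fun v hvack hv m hm hsender hsurr => hv (.inr (.inr ?_))⟩
    exact ⟨m, hm, ⟨C, v⟩, hvack, hsender, rfl, hsurr⟩

variable (hE : 3 * (slashable V A).ncard < n)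
include hE

theorem isPrefix_or_isPrefix_of_justified (hC : Justified V C) (hD : Justified V D)
    (hcd : C.c = D.c) : C.chain.IsPrefix D.chain ∨ D.chain.IsPrefix C.chain := by
  cases hC with
  | genesis => exact .inl (genesisChain_isPrefix _)
  | step _ M₁ hM₁V hcard₁ _ hvotes₁ =>
  cases hD with
  | genesis => exact .inr (genesisChain_isPrefix _)
  | step _ M₂ hM₂V hcard₂ _ hvotes₂ =>
  obtain ⟨v, ⟨⟨m₁, hm₁, rfl⟩, m₂, hm₂, hsender⟩, hv⟩ :=
    Set.not_subset.mp (not_inter_subset_of_two_thirds hcard₁ hcard₂ hE)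
  obtain ⟨-, -, hC₁, htarget₁⟩ := hvotes₁ m₁ hm₁
  obtain ⟨-, -, hD₂, htarget₂⟩ := hvotes₂ m₂ hm₂
  obtain rfl : m₁ = m₂ := by
    by_contra hne
    exact hv (.inl ⟨m₁, hM₁V hm₁, m₂, hM₂V hm₂, rfl, hsender, hne, by rw [htarget₁, htarget₂, hcd]⟩)
  exact List.prefix_or_prefix_of_prefix hC₁ hD₂

theorem isPrefix_of_finalizedWithAcks_of_justified (hC : FinalizedWithAcks V A C)
    (hD : Justified V D) (hlt : C.c < D.c) : C.chain.IsPrefix D.chain := by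
  by_cases hCg : C = genesisCheckpoint g
  · exact hCg ▸ genesisChain_isPrefix _
  obtain ⟨Q, hQ, hQsafe⟩ := hC.exists_quorum_not_surrounds hCg
  induction hD with
  | genesis => exact absurd hlt (Nat.not_lt_zero _)
  | step D M hMV hcard hjust hvotes ih =>
    obtain ⟨v, ⟨hvQ, m, hm, rfl⟩, hv⟩ :=
      Set.not_subset.mp (not_inter_subset_of_two_thirds hQ hcard hE)
    obtain ⟨-, hSD, -, htarget⟩ := hvotes m hm
    have hS : ¬ m.source.lt C := fun hSC =>
      hQsafe _ hvQ hv m (hMV hm) rfl ⟨hSC, htarget ▸ hlt⟩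
    refine Chain.IsPrefix.trans ?_ hSD
    rcases lt_trichotomy m.source.c C.c with hc | hc | hc
    · exact absurd (.inl hc) hS
    · rcases isPrefix_or_isPrefix_of_justified hE hC.justified (hjust m hm) hc.symm
        with hCS | hSC
      · exact hCS
      · by_contra hCS
        exact hS (.inr ⟨hc, hSC.height_lt hCS⟩)
    · exact ih m hm hc

end AccountableSafety

/-- accountable safety with acknowledgments. -/
theorem accountable_safety_with_acks
    {n : ℕ} {β : Type} {g : β}
    (V₁ V₂ : Set (FFGVote n β g)) (A₁ A₂ : Set (Ack n β g))
    (C₁ C₂ : Checkpoint β g)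
    (h₁ : FinalizedWithAcks V₁ A₁ C₁) (h₂ : FinalizedWithAcks V₂ A₂ C₂)
    (hconf : C₁.chain.Conflicts C₂.chain) :
    n ≤ 3 * Set.ncard {v : Fin n |
      ViolatesE1 (V₁ ∪ V₂) v ∨ ViolatesE2 (V₁ ∪ V₂) v ∨
      ViolatesE3 (V₁ ∪ V₂) (A₁ ∪ A₂) v} := by
  by_contra! hE
  have hf₁ := h₁.mono (Set.subset_union_left (t := V₂)) (Set.subset_union_left (t := A₂))
  have hf₂ := h₂.mono (Set.subset_union_right (s := V₁)) (Set.subset_union_right (s := A₁))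
  change 3 * (slashable (V₁ ∪ V₂) (A₁ ∪ A₂)).ncard < n at hE
  rcases lt_trichotomy C₁.c C₂.c with h | h | h
  · exact hconf.1 (isPrefix_of_finalizedWithAcks_of_justified hE hf₁ hf₂.justified h)
  · rcases isPrefix_or_isPrefix_of_justified hE hf₁.justified hf₂.justified h with h' | h'
    exacts [hconf.1 h', hconf.2 h']
  · exact hconf.2 (isPrefix_of_finalizedWithAcks_of_justified hE hf₂ hf₁.justified h)
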